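/- Let V be a real inner product space and M : V →L[ℝ] V a continuous linear map that is symmetric with respect to the inner product (⟪M x, y⟫ = ⟪x, M y⟫ for all x, y). Let ν be a real constant, μ : ℝ → ℝ differentiable, and Q : ℝ → V twice differentiable with ⟪M Q(t), Q(t)⟫ = 1 and Q''(t) = μ(t) • M Q(t) + ν • Q(t) for all t. Then the Joachimsthal quantity η(t) = μ(t) · ⟪M Q(t), M Q(t)⟫² is constant in t. -/

import Mathlib

open scoped RealInnerProductSpace

/-!
Differentiate the constraint `⟪M Q, Q⟫ = 1` three times along the motion, replacing `Q''`
by `μ • M Q + ν • Q` each time. The first derivative gives `⟪M Q, Q'⟫ = 0`; the second turns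
this into the identity `⟪M Q', Q'⟫ + μ ⟪M Q, M Q⟫ = -ν`; the third gives
`μ' ⟪M Q, M Q⟫ + 4 μ ⟪M Q, M Q'⟫ = 0`, and `⟪M Q, M Q⟫` times this is the derivative of
`η = μ ⟪M Q, M Q⟫²`.
-/

section Calculus

variable {V : Type*} [NormedAddCommGroup V] [InnerProductSpace ℝ V]
  {f : ℝ → V} {f' : V} {t : ℝ}

theorem HasDerivAt.eq_zero_of_forall_eq {E : Type*} [NormedAddCommGroup E] [NormedSpace ℝ E]
    {g : ℝ → E} {g' c : E} (hg : HasDerivAt g g' t) (hc : ∀ s, g s = c) : g' = 0 := by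
  rw [funext hc] at hg
  exact hg.unique (hasDerivAt_const t c)

theorem HasDerivAt.inner_self (hf : HasDerivAt f f' t) :
    HasDerivAt (fun s => ⟪f s, f s⟫) (2 * ⟪f t, f'⟫) t := by
  refine (hf.inner ℝ hf).congr_deriv ?_
  rw [real_inner_comm f']
  ring

theorem HasDerivAt.inner_apply_self {M : V →L[ℝ] V} (hM : (M : V →ₗ[ℝ] V).IsSymmetric)
    (hf : HasDerivAt f f' t) :
    HasDerivAt (fun s => ⟪M (f s), f s⟫) (2 * ⟪M (f t), f'⟫) t := by
  have hsymm : ⟪M f', f t⟫ = ⟪M (f t), f'⟫ := by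
    rw [real_inner_comm]
    exact (hM (f t) f').symm
  refine ((M.hasFDerivAt.comp_hasDerivAt t hf).inner ℝ hf).congr_deriv ?_
  rw [Function.comp_apply, hsymm]
  ring

end Calculus

namespace JacobiEllipsoid

variable {V : Type*} [NormedAddCommGroup V] [InnerProductSpace ℝ V]
  {M : V →L[ℝ] V} {μ μ' : ℝ → ℝ} {ν : ℝ} {Q Q' Q'' : ℝ → V}

def joachimsthal (M : V →L[ℝ] V) (μ : ℝ → ℝ) (Q : ℝ → V) (t : ℝ) : ℝ :=
  μ t * ⟪M (Q t), M (Q t)⟫ ^ 2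

theorem inner_apply_velocity_eq_zero (hM : (M : V →ₗ[ℝ] V).IsSymmetric)
    (hQ : ∀ t, HasDerivAt Q (Q' t) t) (hcon : ∀ t, ⟪M (Q t), Q t⟫ = 1) (t : ℝ) :
    ⟪M (Q t), Q' t⟫ = 0 := by
  have h := ((hQ t).inner_apply_self hM).eq_zero_of_forall_eq hcon
  linarith

theorem inner_apply_velocity_add_mul_inner_eq_neg (hM : (M : V →ₗ[ℝ] V).IsSymmetric)
    (hQ : ∀ t, HasDerivAt Q (Q' t) t) (hQ' : ∀ t, HasDerivAt Q' (Q'' t) t)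
    (hcon : ∀ t, ⟪M (Q t), Q t⟫ = 1) (heq : ∀ t, Q'' t = μ t • M (Q t) + ν • Q t) (t : ℝ) :
    ⟪M (Q' t), Q' t⟫ + μ t * ⟪M (Q t), M (Q t)⟫ = -ν := by
  have h := ((M.hasFDerivAt.comp_hasDerivAt t (hQ t)).inner ℝ (hQ' t)).eq_zero_of_forall_eq
    (inner_apply_velocity_eq_zero hM hQ hcon)
  have hacc : ⟪M (Q t), Q'' t⟫ = μ t * ⟪M (Q t), M (Q t)⟫ + ν := by
    rw [heq, inner_add_right, real_inner_smul_right, real_inner_smul_right, hcon, mul_one]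
  simp only [Function.comp_apply] at h
  linarith

theorem deriv_mul_inner_add_four_mul_inner_eq_zero (hM : (M : V →ₗ[ℝ] V).IsSymmetric)
    (hμ : ∀ t, HasDerivAt μ (μ' t) t)
    (hQ : ∀ t, HasDerivAt Q (Q' t) t) (hQ' : ∀ t, HasDerivAt Q' (Q'' t) t)
    (hcon : ∀ t, ⟪M (Q t), Q t⟫ = 1) (heq : ∀ t, Q'' t = μ t • M (Q t) + ν • Q t) (t : ℝ) :
    μ' t * ⟪M (Q t), M (Q t)⟫ + 4 * μ t * ⟪M (Q t), M (Q' t)⟫ = 0 := by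
  have h := (((hQ' t).inner_apply_self hM).add
      ((hμ t).mul (M.hasFDerivAt.comp_hasDerivAt t (hQ t)).inner_self)).eq_zero_of_forall_eq
    (inner_apply_velocity_add_mul_inner_eq_neg hM hQ hQ' hcon heq)
  have hperp : ⟪M (Q' t), Q t⟫ = 0 := by
    rw [real_inner_comm, ← inner_apply_velocity_eq_zero hM hQ hcon t]
    exact (hM (Q t) (Q' t)).symm
  have hacc : ⟪M (Q' t), Q'' t⟫ = μ t * ⟪M (Q t), M (Q' t)⟫ := by
    rw [heq, inner_add_right, real_inner_smul_right, real_inner_smul_right, hperp,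
      real_inner_comm]
    ring
  simp only [Function.comp_apply, hacc] at h
  linear_combination h

theorem hasDerivAt_joachimsthal (hM : (M : V →ₗ[ℝ] V).IsSymmetric)
    (hμ : ∀ t, HasDerivAt μ (μ' t) t)
    (hQ : ∀ t, HasDerivAt Q (Q' t) t) (hQ' : ∀ t, HasDerivAt Q' (Q'' t) t)
    (hcon : ∀ t, ⟪M (Q t), Q t⟫ = 1) (heq : ∀ t, Q'' t = μ t • M (Q t) + ν • Q t) (t : ℝ) :
    HasDerivAt (joachimsthal M μ Q) 0 t := by
  refine ((hμ t).mul ((M.hasFDerivAt.comp_hasDerivAt t (hQ t)).inner_self.pow 2)).congr_deriv ?_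
  simp only [Function.comp_apply, Pi.pow_apply]
  linear_combination ⟪M (Q t), M (Q t)⟫ *
    deriv_mul_inner_add_four_mul_inner_eq_zero hM hμ hQ hQ' hcon heq t

end JacobiEllipsoid

/-- **Joachimsthal's constant.** For the Jacobi problem on the
ellipsoid `{⟪M Q, Q⟫ = 1}` with `M` symmetric, governed by
`Q'' = μ • M Q + ν • Q`, the quantity `η = μ ⟪M Q, M Q⟫²` is constant in time. -/
theorem stmt_9
    {V : Type*} [NormedAddCommGroup V] [InnerProductSpace ℝ V]
    (M : V →L[ℝ] V)
    (hM : ∀ x y : V, ⟪M x, y⟫ = ⟪x, M y⟫)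
    (ν : ℝ) (μ : ℝ → ℝ) (hμ : Differentiable ℝ μ)
    (Q : ℝ → V)
    (hQ1 : Differentiable ℝ Q) (hQ2 : Differentiable ℝ (deriv Q))
    (hcon : ∀ t, ⟪M (Q t), Q t⟫ = (1 : ℝ))
    (heq : ∀ t, deriv (deriv Q) t = μ t • M (Q t) + ν • Q t) :
    ∀ t s : ℝ,
      μ t * (⟪M (Q t), M (Q t)⟫ : ℝ) ^ 2 = μ s * (⟪M (Q s), M (Q s)⟫ : ℝ) ^ 2 := by
  have hη : ∀ t, HasDerivAt (JacobiEllipsoid.joachimsthal M μ Q) 0 t :=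
    JacobiEllipsoid.hasDerivAt_joachimsthal hM (fun t => (hμ t).hasDerivAt)
      (fun t => (hQ1 t).hasDerivAt) (fun t => (hQ2 t).hasDerivAt) hcon heq
  exact is_const_of_deriv_eq_zero (fun t => (hη t).differentiableAt) (fun t => (hη t).deriv)
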